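/- arXiv:1311.6288 — 4 statements merged into one kernel-verified Lean document; each statement's English description precedes it below -/
import Mathlib

section
/- There exists a constant C₀ > 1 with the following property. For every commutative unital normed ℝ-algebra A with submultiplicative norm, every ℝ-linear derivation D : A → A, every integer N ≥ 3, every real L ≥ 1, and all elements u₁, u₂, u₃, u₄, u₅ ∈ A satisfying ‖Dⁿ uᵢ‖ ≤ L^{n−3/2}·(n−2)! for all integers 2 ≤ n ≤ N and all i ∈ {1,…,5}, one has ‖Dⁿ(u₁u₂u₃u₄u₅)‖ ≤ C₀·(1 + Σ_{i=1}^{5} Σ_{l=0}^{1} ‖D^l uᵢ‖)^{16}·L^{n−3/2}·(n−2)! for all integers 2 ≤ n ≤ N. -/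
/-!
By the Leibniz rule, `‖Dⁿ(xy)‖ ≤ ∑_{i+j=n} C(n,i) ‖Dⁱx‖ ‖Dʲy‖`. So if a sequence `M` satisfies
`∑_{i+j=n} C(n,i) M(i) M(j) ≤ K M(n)`, bounds `‖Dᵏx‖ ≤ a M(k)` and `‖Dᵏy‖ ≤ b M(k)` for `k ≤ N`
give `‖Dᵏ(xy)‖ ≤ K a b M(k)`, and a product of five factors costs `K⁴`.

Take `M(k) = L^{max(k - 3/2, 0)} (k-2)!`, so that `M(0) = M(1) = 1`. The power of `L` is
supermultiplicative in `k`, and `g(k) = (k-2)!/k!` satisfies `g(i) g(j) ≤ 8 (g(i) + g(j)) g(i+j)`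
and `∑ g ≤ 3` (telescoping), whence `K = 48`. With `S = 1 + ∑ᵢ (‖uᵢ‖ + ‖D uᵢ‖)`, every `uᵢ`
satisfies `‖Dᵏuᵢ‖ ≤ S M(k)`, which gives the bound `48⁴ S⁵ M(n) ≤ 48⁴ S¹⁶ M(n)`.
-/

open Finset
open scoped Nat

theorem iterate_map_mul_eq_sum_antidiagonal {A F : Type*} [NonUnitalNonAssocSemiring A]
    [FunLike F A A] [AddMonoidHomClass F A A] (D : F)
    (hD : ∀ x y : A, D (x * y) = x * D y + D x * y) (x y : A) (n : ℕ) :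
    (⇑D)^[n] (x * y) = ∑ p ∈ antidiagonal n, n.choose p.1 • ((⇑D)^[p.1] x * (⇑D)^[p.2] y) := by
  induction n with
  | zero => simp
  | succ n ih =>
    rw [sum_antidiagonal_choose_succ_nsmul (M := A) (fun i j => (⇑D)^[i] x * (⇑D)^[j] y) n]
    simp only [Function.iterate_succ_apply', ih, map_sum, map_nsmul, hD, smul_add,
      sum_add_distrib]
    congr 1
    refine sum_congr rfl fun p hp ↦ ?_
    rw [n.choose_symm_of_eq_add (mem_antidiagonal.1 hp).symm]

def BinomialSubmultiplicative (K : ℝ) (M : ℕ → ℝ) : Prop :=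
  ∀ n, ∑ p ∈ antidiagonal n, n.choose p.1 * (M p.1 * M p.2) ≤ K * M n

section NormBounds

variable {A F : Type*} [FunLike F A A] {K c : ℝ} {M : ℕ → ℝ} {N : ℕ}

theorem norm_iterate_map_mul_le [NonUnitalSeminormedRing A] [AddMonoidHomClass F A A] (D : F)
    (hD : ∀ x y : A, D (x * y) = x * D y + D x * y) (x y : A) (n : ℕ) :
    ‖(⇑D)^[n] (x * y)‖ ≤
      ∑ p ∈ antidiagonal n, n.choose p.1 * (‖(⇑D)^[p.1] x‖ * ‖(⇑D)^[p.2] y‖) := by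
  rw [iterate_map_mul_eq_sum_antidiagonal D hD]
  refine (norm_sum_le _ _).trans (sum_le_sum fun p _ ↦ ?_)
  exact norm_nsmul_le.trans (by gcongr; exact norm_mul_le _ _)

theorem norm_iterate_map_mul_le_of_le [NonUnitalSeminormedRing A] [AddMonoidHomClass F A A]
    (D : F) (hD : ∀ x y : A, D (x * y) = x * D y + D x * y) (hM : BinomialSubmultiplicative K M)
    {a b : ℝ} (ha : 0 ≤ a) (hb : 0 ≤ b) {x y : A}
    (hx : ∀ k ≤ N, ‖(⇑D)^[k] x‖ ≤ a * M k) (hy : ∀ k ≤ N, ‖(⇑D)^[k] y‖ ≤ b * M k) :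
    ∀ n ≤ N, ‖(⇑D)^[n] (x * y)‖ ≤ K * (a * b) * M n := by
  intro n hn
  have hpN : ∀ p ∈ antidiagonal n, p.1 ≤ N ∧ p.2 ≤ N := fun p hp ↦ by
    have := mem_antidiagonal.1 hp; omega
  calc ‖(⇑D)^[n] (x * y)‖
      ≤ ∑ p ∈ antidiagonal n, n.choose p.1 * (‖(⇑D)^[p.1] x‖ * ‖(⇑D)^[p.2] y‖) :=
        norm_iterate_map_mul_le D hD x y n
    _ ≤ ∑ p ∈ antidiagonal n, n.choose p.1 * (a * M p.1 * (b * M p.2)) := by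
        refine sum_le_sum fun p hp ↦ ?_
        have hx' := hx _ (hpN p hp).1
        gcongr
        exacts [(norm_nonneg _).trans hx', hy _ (hpN p hp).2]
    _ = a * b * ∑ p ∈ antidiagonal n, n.choose p.1 * (M p.1 * M p.2) := by
        rw [mul_sum]; exact sum_congr rfl fun p _ ↦ by ring
    _ ≤ a * b * (K * M n) := by gcongr; exact hM n
    _ = K * (a * b) * M n := by ring

theorem norm_iterate_map_prod_le [SeminormedCommRing A] [AddMonoidHomClass F A A] (D : F)
    (hD : ∀ x y : A, D (x * y) = x * D y + D x * y) (hM : BinomialSubmultiplicative K M)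
    (hK : 0 ≤ K) (hc : 0 ≤ c) {m : ℕ} {u : Fin (m + 1) → A}
    (hu : ∀ i, ∀ k ≤ N, ‖(⇑D)^[k] (u i)‖ ≤ c * M k) :
    ∀ n ≤ N, ‖(⇑D)^[n] (∏ i, u i)‖ ≤ K ^ m * c ^ (m + 1) * M n := by
  induction m with
  | zero => simpa using hu 0
  | succ m ih =>
    intro n hn
    rw [Fin.prod_univ_succ]
    convert norm_iterate_map_mul_le_of_le D hD hM hc (by positivity) (hu 0)
      (ih fun i ↦ hu i.succ) n hn using 1
    ring

end NormBounds

/-- Equal to `1 / (k (k - 1))` for `k ≥ 2`; truncated subtraction makes it `1` for `k < 2`. -/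
noncomputable def factorialRatio (k : ℕ) : ℝ := (k - 2)! / k !

lemma factorialRatio_nonneg (k : ℕ) : 0 ≤ factorialRatio k := by
  unfold factorialRatio; positivity

lemma factorialRatio_of_lt_two {k : ℕ} (hk : k < 2) : factorialRatio k = 1 := by
  interval_cases k <;> simp [factorialRatio]

lemma factorialRatio_add_two (k : ℕ) : factorialRatio (k + 2) = 1 / ((k + 2) * (k + 1)) := by
  rw [factorialRatio, Nat.add_sub_cancel, Nat.factorial_succ, Nat.factorial_succ]
  push_cast
  field_simp
  ring

lemma sum_range_add_two_factorialRatio (m : ℕ) :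
    ∑ k ∈ range (m + 2), factorialRatio k = 3 - 1 / (m + 1) := by
  induction m with
  | zero => norm_num [sum_range_succ, factorialRatio_of_lt_two]
  | succ m ih =>
    rw [sum_range_succ, ih, factorialRatio_add_two]
    push_cast
    field_simp
    ring

lemma sum_range_factorialRatio_le (m : ℕ) : ∑ k ∈ range m, factorialRatio k ≤ 3 :=
  calc ∑ k ∈ range m, factorialRatio k
      ≤ ∑ k ∈ range (m + 2), factorialRatio k :=
        sum_le_sum_of_subset_of_nonneg (range_mono (by omega))
          fun k _ _ ↦ factorialRatio_nonneg k
    _ ≤ 3 := by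
        rw [sum_range_add_two_factorialRatio, sub_le_self_iff]
        positivity

lemma factorialRatio_mul_le (i j : ℕ) :
    factorialRatio i * factorialRatio j ≤
      8 * (factorialRatio i + factorialRatio j) * factorialRatio (i + j) := by
  wlog hij : i ≤ j generalizing i j
  · simpa only [add_comm, mul_comm (factorialRatio i)] using this j i (by omega)
  match i, j, hij with
  | 0, j, _ =>
    have := factorialRatio_nonneg j
    rw [factorialRatio_of_lt_two (by omega), zero_add]
    nlinarith
  | 1, 1, _ =>
    norm_num [factorialRatio_of_lt_two, factorialRatio_add_two 0]
  | 1, b + 2, _ =>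
    rw [factorialRatio_of_lt_two (by omega), show 1 + (b + 2) = b + 1 + 2 by omega,
      factorialRatio_add_two, factorialRatio_add_two]
    push_cast
    field_simp
    nlinarith
  | a + 2, b + 2, _ =>
    rw [show a + 2 + (b + 2) = a + b + 2 + 2 by omega, factorialRatio_add_two,
      factorialRatio_add_two, factorialRatio_add_two]
    push_cast
    field_simp
    nlinarith [sq_nonneg ((a : ℝ) - b)]

lemma choose_mul_factorial_sub_two_mul (i j : ℕ) :
    ((i + j).choose i : ℝ) * ((i - 2)! * (j - 2)!) =
      (i + j)! * (factorialRatio i * factorialRatio j) := by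
  rw [factorialRatio, factorialRatio, ← Nat.add_choose_mul_factorial_mul_factorial i j,
    ← Nat.choose_symm_add]
  push_cast
  field_simp

theorem binomialSubmultiplicative_factorial_sub_two :
    BinomialSubmultiplicative 48 fun k ↦ ((k - 2)! : ℝ) := by
  intro n
  have hsum : ∑ p ∈ antidiagonal n, (factorialRatio p.1 + factorialRatio p.2) ≤ 6 := by
    rw [sum_add_distrib, ← Nat.sum_antidiagonal_swap (f := fun p ↦ factorialRatio p.2)]
    simp only [Prod.snd_swap, Nat.sum_antidiagonal_eq_sum_range_succ_mk]
    linarith [sum_range_factorialRatio_le (n + 1)]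
  calc ∑ p ∈ antidiagonal n, n.choose p.1 * (((p.1 - 2)! : ℝ) * (p.2 - 2)!)
      = ∑ p ∈ antidiagonal n, n ! * (factorialRatio p.1 * factorialRatio p.2) :=
        sum_congr rfl fun p hp ↦ by rw [← mem_antidiagonal.1 hp, choose_mul_factorial_sub_two_mul]
    _ ≤ ∑ p ∈ antidiagonal n,
          n ! * (8 * (factorialRatio p.1 + factorialRatio p.2) * factorialRatio n) := by
        refine sum_le_sum fun p hp ↦ mul_le_mul_of_nonneg_left ?_ (by positivity)
        rw [← mem_antidiagonal.1 hp]
        exact factorialRatio_mul_le _ _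
    _ = 8 * (n ! * factorialRatio n) *
          ∑ p ∈ antidiagonal n, (factorialRatio p.1 + factorialRatio p.2) := by
        rw [mul_sum]; exact sum_congr rfl fun p _ ↦ by ring
    _ ≤ 8 * (n ! * factorialRatio n) * 6 := by
        have := factorialRatio_nonneg n
        gcongr
    _ = 48 * (n - 2)! := by
        rw [factorialRatio, mul_div_cancel₀ _ (by positivity)]; ring

theorem BinomialSubmultiplicative.mul_supermultiplicative {K : ℝ} {M ρ : ℕ → ℝ}
    (hM : BinomialSubmultiplicative K M) (hM0 : ∀ k, 0 ≤ M k) (hρ0 : ∀ k, 0 ≤ ρ k)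
    (hρ : ∀ i j, ρ i * ρ j ≤ ρ (i + j)) : BinomialSubmultiplicative K fun k ↦ ρ k * M k := by
  intro n
  calc ∑ p ∈ antidiagonal n, n.choose p.1 * (ρ p.1 * M p.1 * (ρ p.2 * M p.2))
      ≤ ∑ p ∈ antidiagonal n, ρ n * (n.choose p.1 * (M p.1 * M p.2)) := by
        refine sum_le_sum fun p hp ↦ ?_
        have hρp := hρ p.1 p.2
        rw [mem_antidiagonal.1 hp] at hρp
        have := mul_nonneg (hM0 p.1) (hM0 p.2)
        calc _ = ρ p.1 * ρ p.2 * (n.choose p.1 * (M p.1 * M p.2)) := by ring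
          _ ≤ _ := by gcongr
    _ ≤ ρ n * (K * M n) := by rw [← mul_sum]; exact mul_le_mul_of_nonneg_left (hM n) (hρ0 n)
    _ = K * (ρ n * M n) := by ring

lemma max_sub_add_max_sub_le {x y c : ℝ} (hx : 0 ≤ x) (hy : 0 ≤ y) (hc : 0 ≤ c) :
    max (x - c) 0 + max (y - c) 0 ≤ max (x + y - c) 0 := by
  simp only [max_def]
  split_ifs <;> linarith

noncomputable def majorant (L : ℝ) (k : ℕ) : ℝ := L ^ max ((k : ℝ) - 3 / 2) 0 * (k - 2)!

lemma majorant_nonneg {L : ℝ} (hL : 0 ≤ L) (k : ℕ) : 0 ≤ majorant L k := by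
  unfold majorant; positivity

lemma majorant_of_lt_two (L : ℝ) {k : ℕ} (hk : k < 2) : majorant L k = 1 := by
  interval_cases k <;> norm_num [majorant]

lemma majorant_of_two_le (L : ℝ) {k : ℕ} (hk : 2 ≤ k) :
    majorant L k = L ^ ((k : ℝ) - 3 / 2) * (k - 2)! := by
  have : (2 : ℝ) ≤ k := by exact_mod_cast hk
  rw [majorant, max_eq_left (by linarith)]

theorem binomialSubmultiplicative_majorant {L : ℝ} (hL : 1 ≤ L) :
    BinomialSubmultiplicative 48 (majorant L) := by
  have hL0 : 0 ≤ L := by linarith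
  refine binomialSubmultiplicative_factorial_sub_two.mul_supermultiplicative
    (fun k ↦ by positivity) (fun k ↦ by positivity) fun i j ↦ ?_
  rw [← Real.rpow_add (by linarith), Nat.cast_add]
  exact Real.rpow_le_rpow_of_exponent_le hL
    (max_sub_add_max_sub_le i.cast_nonneg j.cast_nonneg (by norm_num))

lemma norm_iterate_le_mul_majorant {E : Type*} [Norm E] (f : E → E) {x : E} {L c : ℝ} {N : ℕ}
    (hL : 0 ≤ L) (hc : 1 ≤ c) (hlow : ∀ k < 2, ‖f^[k] x‖ ≤ c)
    (hhigh : ∀ k : ℕ, 2 ≤ k → k ≤ N → ‖f^[k] x‖ ≤ L ^ ((k : ℝ) - 3 / 2) * (k - 2)!) :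
    ∀ k ≤ N, ‖f^[k] x‖ ≤ c * majorant L k := by
  intro k hk
  rcases lt_or_ge k 2 with hk2 | hk2
  · rw [majorant_of_lt_two L hk2, mul_one]; exact hlow k hk2
  · calc ‖f^[k] x‖ ≤ majorant L k := by rw [majorant_of_two_le L hk2]; exact hhigh k hk2 hk
      _ ≤ c * majorant L k := le_mul_of_one_le_left (majorant_nonneg hL k) hc

/-- Lemma 2.2 (i). There is a universal constant `C₀ > 1` such that for
any commutative unital normed `ℝ`-algebra `A` (with submultiplicative norm), any
`ℝ`-linear derivation `D : A → A`, any `N ≥ 3`, `L ≥ 1`, and `u₁,…,u₅ ∈ A` with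
`‖Dⁿ uᵢ‖ ≤ L^(n-3/2) (n-2)!` for `2 ≤ n ≤ N`, one has
`‖Dⁿ(u₁⋯u₅)‖ ≤ C₀ (1 + Σᵢ Σ_{l≤1} ‖D^l uᵢ‖)^16 L^(n-3/2) (n-2)!` for `2 ≤ n ≤ N`. -/
theorem derivation_product_estimate_five :
    ∃ C₀ : ℝ, 1 < C₀ ∧
      ∀ (A : Type) [NormedCommRing A] [NormedAlgebra ℝ A] (D : A →ₗ[ℝ] A),
        (∀ x y : A, D (x * y) = x * D y + D x * y) →
        ∀ (N : ℕ), 3 ≤ N → ∀ (L : ℝ), 1 ≤ L → ∀ u : Fin 5 → A,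
          (∀ i : Fin 5, ∀ n : ℕ, 2 ≤ n → n ≤ N →
            ‖(⇑D)^[n] (u i)‖ ≤ L ^ ((n : ℝ) - 3 / 2) * (n - 2).factorial) →
          ∀ n : ℕ, 2 ≤ n → n ≤ N →
            ‖(⇑D)^[n] (∏ i, u i)‖ ≤
              C₀ * (1 + ∑ i : Fin 5, ∑ l ∈ Finset.range 2, ‖(⇑D)^[l] (u i)‖) ^ 16 *
                L ^ ((n : ℝ) - 3 / 2) * (n - 2).factorial := by
  refine ⟨48 ^ 4, by norm_num, ?_⟩
  intro A _ _ D hD N _ L hL u hu n hn hnN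
  set S := 1 + ∑ i : Fin 5, ∑ l ∈ range 2, ‖(⇑D)^[l] (u i)‖
  have hS : 1 ≤ S := le_add_of_nonneg_right (by positivity)
  have hlow : ∀ i, ∀ l < 2, ‖(⇑D)^[l] (u i)‖ ≤ S := fun i l hl ↦ calc
    _ ≤ ∑ l ∈ range 2, ‖(⇑D)^[l] (u i)‖ :=
        single_le_sum (fun _ _ ↦ norm_nonneg _) (mem_range.2 hl)
    _ ≤ ∑ i, ∑ l ∈ range 2, ‖(⇑D)^[l] (u i)‖ :=
        single_le_sum (f := fun i ↦ ∑ l ∈ range 2, ‖(⇑D)^[l] (u i)‖)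
          (fun _ _ ↦ by positivity) (mem_univ i)
    _ ≤ S := le_add_of_nonneg_left zero_le_one
  have hprod := norm_iterate_map_prod_le D hD (binomialSubmultiplicative_majorant hL)
    (by norm_num) (by positivity) (m := 4)
    (fun i ↦ norm_iterate_le_mul_majorant D (by linarith) hS (hlow i) (hu i)) n hnN
  have hM : 0 ≤ majorant L n := majorant_nonneg (by linarith) n
  calc ‖(⇑D)^[n] (∏ i, u i)‖ ≤ 48 ^ 4 * S ^ 5 * majorant L n := hprod
    _ ≤ 48 ^ 4 * S ^ 16 * majorant L n := by gcongr; norm_num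
    _ = _ := by rw [majorant_of_two_le L hn]; ring
end

section
/- Let A be a commutative unital normed ℝ-algebra with submultiplicative norm and D : A → A an ℝ-linear derivation. Let C₁ > 1 be a constant such that for every integer N' ≥ 3, every real L' ≥ 1, and all v₁, v₂, v₃ ∈ A with ‖Dⁿ vᵢ‖ ≤ (L')^{n−1}·(n−2)! for all 2 ≤ n ≤ N', one has ‖Dⁿ(v₁v₂v₃)‖ ≤ C₁·(1 + Σ_{i=1}^{3} Σ_{l=0}^{1} ‖D^l vᵢ‖)^{6}·(L')^{n−1}·(n−2)! for all 2 ≤ n ≤ N'. Let N ≥ 3 be an integer, let u ∈ A be invertible, and let L be a real number with L ≥ ‖D²(u⁻¹)‖² + C₁²·(1 + Σ_{l=0}^{1} ( 2‖D^l(u⁻¹)‖ + ‖D^{1+l} u‖ ))^{12}, and assume ‖Dⁿ u‖ ≤ L^{n−2}·(n−3)! for all integers 3 ≤ n ≤ N. Then ‖Dⁿ(u⁻¹)‖ ≤ L^{n−3/2}·(n−2)! for all integers 2 ≤ n ≤ N. -/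
/-!
From `u * v = 1` and the Leibniz rule, `D v = -(v * v * D u)`, hence
`Dⁿ⁺¹ v = -Dⁿ (v * v * D u)`. With `W = √L` we have `L ^ (n - 3/2) = W ^ (2n - 3)`, and the
choice of `L` gives `‖D² v‖ ≤ W` and `C₁ T⁶ ≤ W`, where `T = 1 + 2‖v‖ + ‖D u‖ + 2‖D v‖ + ‖D² u‖`.
The bound then follows by strong induction on `n`. For `n ≥ 4` the triple-product estimate
applied to `v, v, D u` with `L' = W²` (its premises come from the induction hypothesis, since
`W ^ (2k - 3) ≤ W ^ (2k - 2)`) gives `‖Dⁿ v‖ ≤ C₁ T⁶ W ^ (2n - 4) (n - 3)!`. It cannot be used at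
`n = 3`, where its premises would include the bound on `D³ v` itself; there `D² (v * v * D u)` is
expanded by the Leibniz rule and bounded directly using `T⁶ ≤ W` and `‖D³ u‖ ≤ W²`.
-/

open Function

section Leibniz

variable {A F : Type*} [CommRing A] [FunLike F A A] {D : F}

theorem map_one_eq_zero_of_leibniz (hD : ∀ x y : A, D (x * y) = x * D y + D x * y) :
    D 1 = 0 := by
  simpa using hD 1 1

theorem map_eq_neg_mul_of_mul_eq_one (hD : ∀ x y : A, D (x * y) = x * D y + D x * y)
    {u v : A} (huv : u * v = 1) : D v = -(v * v * D u) := by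
  have h : u * D v + D u * v = 0 := by rw [← hD, huv, map_one_eq_zero_of_leibniz hD]
  linear_combination v * h - D v * huv

theorem iterate_succ_eq_neg_of_mul_eq_one [AddMonoidHomClass F A A]
    (hD : ∀ x y : A, D (x * y) = x * D y + D x * y)
    {u v : A} (huv : u * v = 1) (n : ℕ) :
    (⇑D)^[n + 1] v = -(⇑D)^[n] (v * v * D u) := by
  rw [iterate_succ_apply, map_eq_neg_mul_of_mul_eq_one hD huv, iterate_map_neg]

theorem iterate_two_mul_of_leibniz [AddMonoidHomClass F A A]
    (hD : ∀ x y : A, D (x * y) = x * D y + D x * y) (x y : A) :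
    (⇑D)^[2] (x * y) = x * (⇑D)^[2] y + 2 • (D x * D y) + (⇑D)^[2] x * y := by
  simp only [iterate_succ_apply, iterate_zero_apply]
  rw [hD, map_add, hD, hD]
  ring

end Leibniz

section Normed

variable {A F : Type*} [NormedCommRing A] [FunLike F A A] {D : F}

theorem norm_map_mul_le_of_leibniz (hD : ∀ x y : A, D (x * y) = x * D y + D x * y) (x y : A) :
    ‖D (x * y)‖ ≤ ‖x‖ * ‖D y‖ + ‖D x‖ * ‖y‖ := by
  rw [hD]
  exact (norm_add_le _ _).trans (add_le_add (norm_mul_le _ _) (norm_mul_le _ _))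

theorem norm_iterate_two_mul_le_of_leibniz [AddMonoidHomClass F A A]
    (hD : ∀ x y : A, D (x * y) = x * D y + D x * y)
    (x y : A) :
    ‖(⇑D)^[2] (x * y)‖ ≤ ‖x‖ * ‖(⇑D)^[2] y‖ + 2 * (‖D x‖ * ‖D y‖) + ‖(⇑D)^[2] x‖ * ‖y‖ := by
  rw [iterate_two_mul_of_leibniz hD]
  refine norm_add₃_le.trans (add_le_add_three (norm_mul_le _ _) ?_ (norm_mul_le _ _))
  exact norm_nsmul_le.trans (by push_cast; gcongr; exact norm_mul_le _ _)

theorem norm_iterate_two_mul_mul_le_of_leibniz [AddMonoidHomClass F A A]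
    (hD : ∀ x y : A, D (x * y) = x * D y + D x * y)
    (x y : A) :
    ‖(⇑D)^[2] (x * x * y)‖ ≤ ‖x‖ ^ 2 * ‖(⇑D)^[2] y‖ + 4 * (‖x‖ * ‖D x‖ * ‖D y‖)
      + (2 * (‖x‖ * ‖(⇑D)^[2] x‖) + 2 * ‖D x‖ ^ 2) * ‖y‖ := by
  have h₀ : ‖x * x‖ ≤ ‖x‖ ^ 2 := (norm_mul_le x x).trans_eq (sq _).symm
  have h₁ := norm_map_mul_le_of_leibniz hD x x
  have h₂ := norm_iterate_two_mul_le_of_leibniz hD x x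
  calc _ ≤ _ := norm_iterate_two_mul_le_of_leibniz hD (x * x) y
    _ ≤ ‖x‖ ^ 2 * ‖(⇑D)^[2] y‖ + 2 * ((‖x‖ * ‖D x‖ + ‖D x‖ * ‖x‖) * ‖D y‖)
        + (‖x‖ * ‖(⇑D)^[2] x‖ + 2 * (‖D x‖ * ‖D x‖) + ‖(⇑D)^[2] x‖ * ‖x‖) * ‖y‖ := by gcongr
    _ = _ := by ring

end Normed

section Estimates

variable {A : Type*} [NormedCommRing A]

def IterateBound (D : A → A) (L : ℝ) (N : ℕ) (x : A) : Prop :=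
  ∀ n : ℕ, 2 ≤ n → n ≤ N → ‖D^[n] x‖ ≤ L ^ (n - 1) * (n - 2).factorial

-- The hypothesis on `C₁` from Lemma 2.2 (ii).
def TripleProductEstimate (D : A → A) (C : ℝ) : Prop :=
  ∀ N : ℕ, 3 ≤ N → ∀ L : ℝ, 1 ≤ L → ∀ x y z : A,
    IterateBound D L N x → IterateBound D L N y → IterateBound D L N z →
    ∀ n : ℕ, 2 ≤ n → n ≤ N →
      ‖D^[n] (x * y * z)‖ ≤
        C * (1 + (‖x‖ + ‖D x‖ + (‖y‖ + ‖D y‖) + (‖z‖ + ‖D z‖))) ^ 6 *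
          L ^ (n - 1) * (n - 2).factorial

variable {F : Type*} [FunLike F A A] [AddMonoidHomClass F A A] {D : F} {u v : A} {W : ℝ}

theorem norm_iterate_three_le_of_mul_eq_one (hD : ∀ x y : A, D (x * y) = x * D y + D x * y)
    (huv : u * v = 1)
    (hT : (1 + (2 * ‖v‖ + ‖D u‖ + (2 * ‖D v‖ + ‖(⇑D)^[2] u‖))) ^ 6 ≤ W)
    (hv₂ : ‖(⇑D)^[2] v‖ ≤ W) (hu₃ : ‖(⇑D)^[3] u‖ ≤ W ^ 2) :
    ‖(⇑D)^[3] v‖ ≤ W ^ 3 := by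
  set s := 2 * ‖v‖ + ‖D u‖ + (2 * ‖D v‖ + ‖(⇑D)^[2] u‖)
  have hs : 0 ≤ s := by positivity
  have ha : ‖v‖ ≤ s := by linarith [norm_nonneg (D u), norm_nonneg (D v), norm_nonneg ((⇑D)^[2] u)]
  have hb : ‖D v‖ ≤ s := by linarith [norm_nonneg v, norm_nonneg (D u), norm_nonneg ((⇑D)^[2] u)]
  have hc : ‖D u‖ ≤ s := by linarith [norm_nonneg v, norm_nonneg (D v), norm_nonneg ((⇑D)^[2] u)]
  have hd : ‖D (D u)‖ ≤ s := by
    show ‖(⇑D)^[2] u‖ ≤ s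
    linarith [norm_nonneg v, norm_nonneg (D v), norm_nonneg (D u)]
  clear_value s
  have hW : 1 ≤ W := (one_le_pow₀ (by linarith)).trans hT
  have hsW : 3 * s ^ 2 + 6 * s ^ 3 ≤ W := by
    refine le_trans ?_ hT
    nlinarith [pow_nonneg hs 4, pow_nonneg hs 5, pow_nonneg hs 6, pow_nonneg hs 3]
  rw [iterate_succ_eq_neg_of_mul_eq_one hD huv, norm_neg]
  calc _ ≤ _ := norm_iterate_two_mul_mul_le_of_leibniz hD v (D u)
    _ ≤ s ^ 2 * W ^ 2 + 4 * (s * s * s) + (2 * (s * W) + 2 * s ^ 2) * s := by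
        gcongr
        exact hu₃
    _ ≤ W ^ 2 * (3 * s ^ 2 + 6 * s ^ 3) := by
        have h₁ : s ^ 2 * W ≤ s ^ 2 * W ^ 2 := by gcongr; exact le_self_pow₀ hW two_ne_zero
        have h₂ : s ^ 3 ≤ s ^ 3 * W ^ 2 := le_mul_of_one_le_right (by positivity) (one_le_pow₀ hW)
        linear_combination 2 * h₁ + 6 * h₂
    _ ≤ W ^ 2 * W := by gcongr
    _ = W ^ 3 := by ring

theorem norm_iterate_succ_le_of_mul_eq_one (hD : ∀ x y : A, D (x * y) = x * D y + D x * y)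
    {C : ℝ} (hC : TripleProductEstimate (⇑D) C) (huv : u * v = 1) (hW : 1 ≤ W)
    (hCW : C * (1 + (2 * ‖v‖ + ‖D u‖ + (2 * ‖D v‖ + ‖(⇑D)^[2] u‖))) ^ 6 ≤ W)
    {m : ℕ} (hm : 3 ≤ m) (hv : IterateBound (⇑D) (W ^ 2) m v)
    (hu : IterateBound (⇑D) (W ^ 2) m (D u)) :
    ‖(⇑D)^[m + 1] v‖ ≤ W ^ (2 * m - 1) * (m - 1).factorial := by
  have hT : ‖v‖ + ‖D v‖ + (‖v‖ + ‖D v‖) + (‖D u‖ + ‖D (D u)‖)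
      = 2 * ‖v‖ + ‖D u‖ + (2 * ‖D v‖ + ‖(⇑D)^[2] u‖) := by
    rw [show (⇑D)^[2] u = D (D u) from rfl]
    ring
  rw [iterate_succ_eq_neg_of_mul_eq_one hD huv, norm_neg]
  calc _ ≤ _ := hC m hm (W ^ 2) (one_le_pow₀ hW) v v (D u) hv hv hu m (by omega) le_rfl
    _ ≤ W * (W ^ 2) ^ (m - 1) * (m - 2).factorial := by rw [hT]; gcongr
    _ ≤ W * (W ^ 2) ^ (m - 1) * (m - 1).factorial := by gcongr; omega
    _ = W ^ (2 * m - 1) * (m - 1).factorial := by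
        rw [← pow_mul, ← pow_succ']
        congr 2
        omega

theorem norm_iterate_le_of_mul_eq_one (hD : ∀ x y : A, D (x * y) = x * D y + D x * y)
    {C : ℝ} (hC : TripleProductEstimate (⇑D) C) (huv : u * v = 1) (hC₁ : 1 ≤ C)
    (hCW : C * (1 + (2 * ‖v‖ + ‖D u‖ + (2 * ‖D v‖ + ‖(⇑D)^[2] u‖))) ^ 6 ≤ W)
    (hv₂ : ‖(⇑D)^[2] v‖ ≤ W) {N : ℕ}
    (hu : ∀ n : ℕ, 3 ≤ n → n ≤ N → ‖(⇑D)^[n] u‖ ≤ (W ^ 2) ^ (n - 2) * (n - 3).factorial) :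
    ∀ n : ℕ, 2 ≤ n → n ≤ N → ‖(⇑D)^[n] v‖ ≤ W ^ (2 * n - 3) * (n - 2).factorial := by
  have hT : (1 + (2 * ‖v‖ + ‖D u‖ + (2 * ‖D v‖ + ‖(⇑D)^[2] u‖))) ^ 6 ≤ W :=
    (le_mul_of_one_le_left (by positivity) hC₁).trans hCW
  have hW : 1 ≤ W := (one_le_pow₀ (le_add_of_nonneg_right (by positivity))).trans hT
  intro n
  induction n using Nat.strong_induction_on with
  | _ n ih =>
  intro h₂ hN
  rcases (by omega : n = 2 ∨ n = 3 ∨ 4 ≤ n) with rfl | rfl | h₄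
  · simpa using hv₂
  · simpa using norm_iterate_three_le_of_mul_eq_one hD huv hT hv₂ (by simpa using hu 3 le_rfl hN)
  obtain ⟨m, rfl⟩ : ∃ m, n = m + 1 := ⟨n - 1, by omega⟩
  have hv : IterateBound (⇑D) (W ^ 2) m v := fun k hk hkm =>
    (ih k (by omega) hk (by omega)).trans <| by
      gcongr
      rw [← pow_mul]
      exact pow_le_pow_right₀ hW (by omega)
  have hDu : IterateBound (⇑D) (W ^ 2) m (D u) := fun k hk hkm => by
    have h := hu (k + 1) (by omega) (by omega)
    rwa [iterate_succ_apply, show k + 1 - 2 = k - 1 by omega, show k + 1 - 3 = k - 2 by omega] at h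
  rw [show 2 * (m + 1) - 3 = 2 * m - 1 by omega, show m + 1 - 2 = m - 1 by omega]
  exact norm_iterate_succ_le_of_mul_eq_one hD hC huv hW hCW (by omega) hv hDu

end Estimates

theorem rpow_natCast_sub_three_halves {L : ℝ} (hL : 0 ≤ L) {n : ℕ} (hn : 2 ≤ n) :
    L ^ ((n : ℝ) - 3 / 2) = √L ^ (2 * n - 3) := by
  rw [Real.sqrt_eq_rpow, ← Real.rpow_natCast, ← Real.rpow_mul hL]
  congr 1
  push_cast [Nat.cast_sub (by omega : 3 ≤ 2 * n)]
  ring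

theorem derivation_inverse_estimate_general
    (A : Type) [NormedCommRing A] [NormedAlgebra ℝ A] (D : A →ₗ[ℝ] A)
    (hD : ∀ x y : A, D (x * y) = x * D y + D x * y)
    (C₁ : ℝ) (hC₁ : 1 < C₁)
    (hC₁prop : ∀ (N' : ℕ), 3 ≤ N' → ∀ (L' : ℝ), 1 ≤ L' → ∀ v₁ v₂ v₃ : A,
      (∀ n : ℕ, 2 ≤ n → n ≤ N' →
        ‖(⇑D)^[n] v₁‖ ≤ L' ^ (n - 1) * (n - 2).factorial) →
      (∀ n : ℕ, 2 ≤ n → n ≤ N' →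
        ‖(⇑D)^[n] v₂‖ ≤ L' ^ (n - 1) * (n - 2).factorial) →
      (∀ n : ℕ, 2 ≤ n → n ≤ N' →
        ‖(⇑D)^[n] v₃‖ ≤ L' ^ (n - 1) * (n - 2).factorial) →
      ∀ n : ℕ, 2 ≤ n → n ≤ N' →
        ‖(⇑D)^[n] (v₁ * v₂ * v₃)‖ ≤
          C₁ * (1 + (‖v₁‖ + ‖D v₁‖ + (‖v₂‖ + ‖D v₂‖) + (‖v₃‖ + ‖D v₃‖))) ^ 6 *
            L' ^ (n - 1) * (n - 2).factorial)
    (N : ℕ)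
    (u v : A) (huv : u * v = 1)
    (L : ℝ)
    (hL : ‖(⇑D)^[2] v‖ ^ 2 +
        C₁ ^ 2 * (1 + (2 * ‖v‖ + ‖D u‖ + (2 * ‖D v‖ + ‖(⇑D)^[2] u‖))) ^ 12 ≤ L)
    (hu : ∀ n : ℕ, 3 ≤ n → n ≤ N → ‖(⇑D)^[n] u‖ ≤ L ^ (n - 2) * (n - 3).factorial) :
    ∀ n : ℕ, 2 ≤ n → n ≤ N →
      ‖(⇑D)^[n] v‖ ≤ L ^ ((n : ℝ) - 3 / 2) * (n - 2).factorial := by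
  set T := 1 + (2 * ‖v‖ + ‖D u‖ + (2 * ‖D v‖ + ‖(⇑D)^[2] u‖))
  have hL' : ‖(⇑D)^[2] v‖ ^ 2 + (C₁ * T ^ 6) ^ 2 ≤ L := by rwa [mul_pow, ← pow_mul]
  have hv₂ : ‖(⇑D)^[2] v‖ ≤ √L := Real.le_sqrt_of_sq_le
    ((le_add_of_nonneg_right (sq_nonneg _)).trans hL')
  have hCW : C₁ * T ^ 6 ≤ √L := Real.le_sqrt_of_sq_le
    ((le_add_of_nonneg_left (sq_nonneg _)).trans hL')
  have hL₀ : 0 ≤ L := le_trans (by positivity) hL'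
  rw [← Real.sq_sqrt hL₀] at hu
  intro n h₂ hn
  rw [rpow_natCast_sub_three_halves hL₀ h₂]
  exact norm_iterate_le_of_mul_eq_one hD hC₁prop huv hC₁.le hCW hv₂ hu n h₂ hn

/-- Lemma 2.3. Let `A` be a commutative unital normed `ℝ`-algebra with
submultiplicative norm, `D` an `ℝ`-linear derivation on `A`, and `C₁ > 1` a constant
satisfying the triple-product estimate of Lemma 2.2 (ii). If `u` is invertible with
inverse `v`, `N ≥ 3`, and
`L ≥ ‖D²v‖² + C₁²(1 + Σ_{l≤1}(2‖D^l v‖ + ‖D^{1+l} u‖))^12`, and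
`‖Dⁿ u‖ ≤ L^(n-2) (n-3)!` for all `3 ≤ n ≤ N`, then
`‖Dⁿ v‖ ≤ L^(n-3/2) (n-2)!` for all `2 ≤ n ≤ N`. -/
theorem derivation_inverse_estimate
    (A : Type) [NormedCommRing A] [NormedAlgebra ℝ A] (D : A →ₗ[ℝ] A)
    (hD : ∀ x y : A, D (x * y) = x * D y + D x * y)
    (C₁ : ℝ) (hC₁ : 1 < C₁)
    (hC₁prop : ∀ (N' : ℕ), 3 ≤ N' → ∀ (L' : ℝ), 1 ≤ L' → ∀ v₁ v₂ v₃ : A,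
      (∀ n : ℕ, 2 ≤ n → n ≤ N' →
        ‖(⇑D)^[n] v₁‖ ≤ L' ^ (n - 1) * (n - 2).factorial) →
      (∀ n : ℕ, 2 ≤ n → n ≤ N' →
        ‖(⇑D)^[n] v₂‖ ≤ L' ^ (n - 1) * (n - 2).factorial) →
      (∀ n : ℕ, 2 ≤ n → n ≤ N' →
        ‖(⇑D)^[n] v₃‖ ≤ L' ^ (n - 1) * (n - 2).factorial) →
      ∀ n : ℕ, 2 ≤ n → n ≤ N' →
        ‖(⇑D)^[n] (v₁ * v₂ * v₃)‖ ≤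
          C₁ * (1 + (‖v₁‖ + ‖D v₁‖ + (‖v₂‖ + ‖D v₂‖) + (‖v₃‖ + ‖D v₃‖))) ^ 6 *
            L' ^ (n - 1) * (n - 2).factorial)
    (N : ℕ) (hN : 3 ≤ N)
    (u v : A) (huv : u * v = 1)
    (L : ℝ)
    (hL : ‖(⇑D)^[2] v‖ ^ 2 +
        C₁ ^ 2 * (1 + (2 * ‖v‖ + ‖D u‖ + (2 * ‖D v‖ + ‖(⇑D)^[2] u‖))) ^ 12 ≤ L)
    (hu : ∀ n : ℕ, 3 ≤ n → n ≤ N → ‖(⇑D)^[n] u‖ ≤ L ^ (n - 2) * (n - 3).factorial) :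
    ∀ n : ℕ, 2 ≤ n → n ≤ N →
      ‖(⇑D)^[n] v‖ ≤ L ^ ((n : ℝ) - 3 / 2) * (n - 2).factorial :=
  derivation_inverse_estimate_general A D hD C₁ hC₁ hC₁prop N u v huv L hL hu
end

section
/- There exists a constant C > 0 such that for every integer n ≥ 4 one has Σ_{k=2}^{n−2} ( n! / (k!·(n−k)!) )·(k−2)!·(n−k−2)! ≤ C·(n−2)!. -/
/-!
Writing `a = k (k - 1)` and `b = (n - k) (n - k - 1)`, the `k`-th summand equals `n! / (a b)`.
Since `n (n - 1) ≤ 4 (a + b)`, we get `1 / (a b) = (1 / a + 1 / b) / (a + b) ≤ 4 (1 / a + 1 / b) / (n (n - 1))`,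
so the sum is at most `4 (n - 2)!` times twice the telescoping sum `∑_{k ≥ 2} 1 / (k (k - 1)) ≤ 1`.
This gives the constant `C = 8`.
-/

open Finset Nat

lemma cast_factorial_eq_mul_mul_factorial_sub_two {m : ℕ} (hm : 2 ≤ m) :
    (m ! : ℝ) = m * (m - 1) * (m - 2)! := by
  obtain ⟨j, rfl⟩ := Nat.exists_eq_add_of_le' hm
  simp [Nat.factorial_succ]
  ring

lemma choose_mul_factorial_sub_two_mul_factorial_sub_two {n k : ℕ} (hk : 2 ≤ k) (hkn : k + 2 ≤ n) :
    (n.choose k : ℝ) * (k - 2)! * (n - k - 2)! * ((k * (k - 1)) * ((n - k : ℕ) * ((n - k : ℕ) - 1)))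
      = n ! := by
  rw [← Nat.choose_mul_factorial_mul_factorial (by omega : k ≤ n), Nat.cast_mul, Nat.cast_mul,
    cast_factorial_eq_mul_mul_factorial_sub_two hk,
    cast_factorial_eq_mul_mul_factorial_sub_two (by omega : 2 ≤ n - k)]
  ring

lemma mul_sub_one_le_four_mul_add {x y : ℝ} (h : 3 ≤ x + y) :
    (x + y) * (x + y - 1) ≤ 4 * (x * (x - 1) + y * (y - 1)) := by
  nlinarith [sq_nonneg (x - y)]

lemma choose_mul_factorial_sub_two_mul_factorial_sub_two_le {n k : ℕ} (hk : 2 ≤ k)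
    (hkn : k + 2 ≤ n) :
    (n.choose k : ℝ) * (k - 2)! * (n - k - 2)!
      ≤ 4 * (n - 2)! * (1 / (k * (k - 1)) + 1 / ((n - k : ℕ) * ((n - k : ℕ) - 1))) := by
  set a : ℝ := k * (k - 1)
  set b : ℝ := (n - k : ℕ) * ((n - k : ℕ) - 1)
  have hk' : (2 : ℝ) ≤ k := by exact_mod_cast hk
  have hnk : (2 : ℝ) ≤ (n - k : ℕ) := by exact_mod_cast (by omega : 2 ≤ n - k)
  have ha : 0 < a := by nlinarith
  have hb : 0 < b := by nlinarith
  have hn : (k + (n - k : ℕ) : ℝ) = n := by exact_mod_cast (by omega : k + (n - k) = n)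
  have hab : (n : ℝ) * (n - 1) ≤ 4 * (a + b) := by
    rw [← hn]
    exact mul_sub_one_le_four_mul_add (by linarith)
  rw [← div_eq_of_eq_mul (by positivity)
      (choose_mul_factorial_sub_two_mul_factorial_sub_two hk hkn).symm,
    div_add_div _ _ ha.ne' hb.ne', one_mul, mul_one, add_comm b, ← mul_div_assoc,
    cast_factorial_eq_mul_mul_factorial_sub_two (by omega : 2 ≤ n)]
  apply div_le_div_of_nonneg_right _ (by positivity)
  nlinarith [(n - 2)!.cast_nonneg (α := ℝ)]

lemma sum_Icc_one_div_mul_sub_one {m : ℕ} (hm : 1 ≤ m) :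
    ∑ k ∈ Icc 2 m, 1 / ((k : ℝ) * (k - 1)) = 1 - 1 / m := by
  induction m, hm using Nat.le_induction with
  | base => simp
  | succ m hm ih =>
    rw [sum_Icc_succ_top (by omega), ih]
    have : (m : ℝ) ≠ 0 := by exact_mod_cast (by omega : m ≠ 0)
    push_cast
    rw [add_sub_cancel_right]
    field_simp
    ring

lemma sum_Icc_reflect {M : Type*} [AddCommMonoid M] (f : ℕ → M) (a n : ℕ) :
    ∑ k ∈ Icc a (n - a), f (n - k) = ∑ k ∈ Icc a (n - a), f k :=
  sum_nbij' (fun k => n - k) (fun k => n - k) (by simp; omega) (by simp; omega)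
    (by simp; omega) (by simp; omega) (fun _ _ => rfl)

/-- There is a constant `C > 0` with
`Σ_{k=2}^{n-2} C(n,k) (k-2)! (n-k-2)! ≤ C (n-2)!` for all integers `n ≥ 4`. -/
theorem binomial_factorial_sum_estimate_one :
    ∃ C : ℝ, 0 < C ∧ ∀ n : ℕ, 4 ≤ n →
      ∑ k ∈ Finset.Icc 2 (n - 2),
          (n.choose k : ℝ) * (k - 2).factorial * (n - k - 2).factorial ≤
        C * (n - 2).factorial := by
  refine ⟨8, by norm_num, fun n hn => ?_⟩
  set g : ℕ → ℝ := fun j => 1 / ((j : ℝ) * (j - 1))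
  have hg : ∑ k ∈ Icc 2 (n - 2), g k ≤ 1 := by
    rw [sum_Icc_one_div_mul_sub_one (by omega)]
    exact sub_le_self _ (by positivity)
  calc ∑ k ∈ Icc 2 (n - 2), (n.choose k : ℝ) * (k - 2)! * (n - k - 2)!
      ≤ ∑ k ∈ Icc 2 (n - 2), 4 * (n - 2)! * (g k + g (n - k)) :=
        sum_le_sum fun k hk => by
          rw [mem_Icc] at hk
          exact choose_mul_factorial_sub_two_mul_factorial_sub_two_le hk.1 (by omega)
    _ = 4 * (n - 2)! * (2 * ∑ k ∈ Icc 2 (n - 2), g k) := by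
        rw [← mul_sum, sum_add_distrib, sum_Icc_reflect g, two_mul]
    _ ≤ 4 * (n - 2)! * (2 * 1) := by gcongr
    _ = 8 * (n - 2)! := by ring
end

section
/- There exists a constant C > 0 such that for every integer m ≥ 6 one has Σ_{n=3}^{m−3} ( m! / (n!·(m−n)!) )·(n−3)!·(m−n−3)! ≤ C·(m−3)!. -/
/-!
The term with index `n` equals `(m - 3)! · m (m - 1) (m - 2) / (n (n - 1) (n - 2) · (m - n) (m - n - 1) (m - n - 2))`,
so it is at most `(m - 3)! · m³ / (a³ b³)` with `a = n - 2`, `b = m - n - 2`. Since `m = a + b + 4 ≤ 3 (a + b)` and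
`(a + b)³ ≤ 4 (a³ + b³)`, this is at most `108 (m - 3)! (1 / a³ + 1 / b³)`, and summing over `n` each of the two
reciprocal-cube sums is bounded by `∑ 1 / u³ < ∞`.
-/

open Finset Nat

theorem choose_mul_factorial_mul_factorial_add_three (k l : ℕ) :
    (k + l + 6).choose (k + 3) * k ! * l ! * ((k + 1) * (k + 2) * (k + 3) * ((l + 1) * (l + 2) * (l + 3)))
      = (k + l + 3)! * ((k + l + 4) * (k + l + 5) * (k + l + 6)) := by
  have h := Nat.choose_mul_factorial_mul_factorial (show k + 3 ≤ k + l + 6 by omega)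
  rw [show k + l + 6 - (k + 3) = l + 3 by omega] at h
  calc _ = (k + l + 6).choose (k + 3) * (k + 3)! * (l + 3)! := by
        simp only [Nat.factorial_succ]; ring
    _ = (k + l + 6)! := h
    _ = _ := by simp only [Nat.factorial_succ]; ring

theorem choose_mul_factorial_mul_factorial_add_three_le (k l : ℕ) :
    ((k + l + 6).choose (k + 3) * k ! * l ! : ℝ)
      ≤ (k + l + 3)! * ((k + l + 6) ^ 3 / ((k + 1) ^ 3 * (l + 1) ^ 3)) := by
  have h : ((k + l + 6).choose (k + 3) * k ! * l ! : ℝ)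
      * ((k + 1) * (k + 2) * (k + 3) * ((l + 1) * (l + 2) * (l + 3)))
      = (k + l + 3)! * ((k + l + 4) * (k + l + 5) * (k + l + 6)) := by
    exact_mod_cast choose_mul_factorial_mul_factorial_add_three k l
  rw [mul_div_assoc', le_div_iff₀ (by positivity)]
  calc _ ≤ ((k + l + 6).choose (k + 3) * k ! * l ! : ℝ)
          * ((k + 1) * (k + 2) * (k + 3) * ((l + 1) * (l + 2) * (l + 3))) := by
        gcongr <;> nlinarith
    _ = (k + l + 3)! * ((k + l + 4) * (k + l + 5) * (k + l + 6)) := h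
    _ ≤ (k + l + 3)! * (k + l + 6) ^ 3 := by gcongr; nlinarith

theorem add_add_four_pow_three_div_le {a b : ℝ} (ha : 1 ≤ a) (hb : 1 ≤ b) :
    (a + b + 4) ^ 3 / (a ^ 3 * b ^ 3) ≤ 108 * (1 / a ^ 3 + 1 / b ^ 3) := by
  have hsum : a + b + 4 ≤ 3 * (a + b) := by linarith
  have hcube : (a + b) ^ 3 ≤ 4 * (a ^ 3 + b ^ 3) := by
    nlinarith [mul_nonneg (by linarith : 0 ≤ a + b) (sq_nonneg (a - b))]
  have hrhs : 108 * (1 / a ^ 3 + 1 / b ^ 3) = 108 * (a ^ 3 + b ^ 3) / (a ^ 3 * b ^ 3) := by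
    field_simp; ring
  rw [hrhs]
  gcongr
  calc (a + b + 4) ^ 3 ≤ (3 * (a + b)) ^ 3 := by gcongr
    _ ≤ 108 * (a ^ 3 + b ^ 3) := by nlinarith

theorem sum_comp_le_tsum_of_injOn {ι β : Type*} {f : β → ℝ} (hf : Summable f)
    (hf₀ : ∀ b, 0 ≤ f b) {s : Finset ι} {g : ι → β} (hg : Set.InjOn g s) :
    ∑ i ∈ s, f (g i) ≤ ∑' b, f b := by
  classical
  rw [← Finset.sum_image hg]
  exact hf.sum_le_tsum _ fun b _ ↦ hf₀ b

theorem choose_mul_factorial_sub_three_le {m n : ℕ} (hn : n ∈ Icc 3 (m - 3)) :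
    (m.choose n : ℝ) * (n - 3)! * (m - n - 3)!
      ≤ 108 * (m - 3)! * (1 / ((n - 2 : ℕ) : ℝ) ^ 3 + 1 / ((m - n - 2 : ℕ) : ℝ) ^ 3) := by
  rw [mem_Icc] at hn
  obtain ⟨k, rfl⟩ : ∃ k, n = k + 3 := ⟨n - 3, by omega⟩
  obtain ⟨l, rfl⟩ : ∃ l, m = k + l + 6 := ⟨m - k - 6, by omega⟩
  rw [show k + 3 - 3 = k by omega, show k + l + 6 - (k + 3) - 3 = l by omega,
    show k + l + 6 - 3 = k + l + 3 by omega, show k + 3 - 2 = k + 1 by omega,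
    show k + l + 6 - (k + 3) - 2 = l + 1 by omega]
  have key := add_add_four_pow_three_div_le (a := k + 1) (b := l + 1) (by simp) (by simp)
  rw [show (k : ℝ) + 1 + (l + 1) + 4 = k + l + 6 by ring] at key
  calc _ ≤ (k + l + 3)! * ((k + l + 6) ^ 3 / ((k + 1) ^ 3 * (l + 1) ^ 3) : ℝ) := by
        exact_mod_cast choose_mul_factorial_mul_factorial_add_three_le k l
    _ ≤ _ := by
        push_cast
        rw [mul_comm 108, mul_assoc]
        exact mul_le_mul_of_nonneg_left key (by positivity)

/-- There is a constant `C > 0` with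
`Σ_{n=3}^{m-3} C(m,n) (n-3)! (m-n-3)! ≤ C (m-3)!` for all integers `m ≥ 6`. -/
theorem binomial_factorial_sum_estimate_two :
    ∃ C : ℝ, 0 < C ∧ ∀ m : ℕ, 6 ≤ m →
      ∑ n ∈ Finset.Icc 3 (m - 3),
          (m.choose n : ℝ) * (n - 3).factorial * (m - n - 3).factorial ≤
        C * (m - 3).factorial := by
  set S := ∑' u : ℕ, 1 / (u : ℝ) ^ 3
  have hS : Summable fun u : ℕ ↦ 1 / (u : ℝ) ^ 3 := Real.summable_one_div_nat_pow.2 (by norm_num)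
  have hS₀ : ∀ u : ℕ, 0 ≤ 1 / (u : ℝ) ^ 3 := fun u ↦ by positivity
  refine ⟨216 * S, by linarith [hS.tsum_pos hS₀ 1 (by norm_num)], fun m _ ↦ ?_⟩
  have hleft : ∑ n ∈ Icc 3 (m - 3), 1 / ((n - 2 : ℕ) : ℝ) ^ 3 ≤ S :=
    sum_comp_le_tsum_of_injOn hS hS₀ fun n hn n' hn' h ↦ by
      simp only [coe_Icc, Set.mem_Icc] at hn hn'; omega
  have hright : ∑ n ∈ Icc 3 (m - 3), 1 / ((m - n - 2 : ℕ) : ℝ) ^ 3 ≤ S :=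
    sum_comp_le_tsum_of_injOn hS hS₀ fun n hn n' hn' h ↦ by
      simp only [coe_Icc, Set.mem_Icc] at hn hn'; omega
  calc _ ≤ ∑ n ∈ Icc 3 (m - 3), 108 * ((m - 3)! : ℝ)
          * (1 / ((n - 2 : ℕ) : ℝ) ^ 3 + 1 / ((m - n - 2 : ℕ) : ℝ) ^ 3) :=
        sum_le_sum fun n hn ↦ choose_mul_factorial_sub_three_le hn
    _ = 108 * (m - 3)! * (∑ n ∈ Icc 3 (m - 3), 1 / ((n - 2 : ℕ) : ℝ) ^ 3
          + ∑ n ∈ Icc 3 (m - 3), 1 / ((m - n - 2 : ℕ) : ℝ) ^ 3) := by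
        rw [← sum_add_distrib, mul_sum]
    _ ≤ 108 * (m - 3)! * (S + S) := by gcongr
    _ = 216 * S * (m - 3)! := by ring
end
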